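/- Let $f, g \in \mathbb{C}[X_1,\ldots,X_n]$ be such that $f = X_1 + f_2 + \cdots + f_l$ and $g = X_2 + g_2 + \cdots + g_m$, where $f_i, g_i$ are homogeneous of degree $i$. If every $2\times 2$ Jacobian minor of $(f,g)$ is a constant (i.e., $\deg[f,g] = 2$), then $f, g \in \mathbb{C}[X_1, X_2]$, i.e., $f$ and $g$ involve only the variables $X_1$ and $X_2$. -/

import Mathlib

/-!
Every Jacobian minor of `(f, g)` is constant, hence equal to its value at the origin, which is the
corresponding minor of the linear parts `X₀, X₁`. So the `(0,1)` minor is `1` and, for `k ≠ 0, 1`,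
the `(0,k)` and `(1,k)` minors vanish; by Cramer's rule this forces `∂ₖf = ∂ₖg = 0`, and in
characteristic zero a polynomial with `∂ₖp = 0` does not involve `X_k`.
-/

open MvPolynomial

namespace MvPolynomial

variable {σ R : Type*}

section TorsionFree

variable [CommSemiring R] [IsAddTorsionFree R]

theorem notMem_vars_of_pderiv_eq_zero {p : MvPolynomial σ R} {k : σ} (h : pderiv k p = 0) :
    k ∉ p.vars := by
  classical
  intro hk
  obtain ⟨d, hd, hdk⟩ := (mem_vars_iff_mem_support k).mp hk
  have hle : Finsupp.single k 1 ≤ d := by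
    rwa [Finsupp.single_le_iff, Nat.one_le_iff_ne_zero, ← Finsupp.mem_support_iff]
  have hcoeff := coeff_pderiv (i := k) p (d - Finsupp.single k 1)
  rw [h, coeff_zero, tsub_add_cancel_of_le hle, ← Nat.cast_succ, mul_comm, ← nsmul_eq_mul,
    eq_comm, nsmul_eq_zero_iff_right (Nat.succ_ne_zero _)] at hcoeff
  exact mem_support_iff.mp hd hcoeff

theorem mem_supported_of_pderiv_eq_zero {p : MvPolynomial σ R} {s : Set σ}
    (h : ∀ k ∉ s, pderiv k p = 0) : p ∈ supported R s := by
  rw [mem_supported]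
  intro k hk
  by_contra hks
  exact notMem_vars_of_pderiv_eq_zero (h k hks) hk

end TorsionFree

section CommRing

variable [CommRing R]

theorem constantCoeff_pderiv (i : σ) (p : MvPolynomial σ R) :
    constantCoeff (pderiv i p) = coeff (Finsupp.single i 1) p := by
  simp [constantCoeff_eq, coeff_pderiv]

theorem coeff_single_one_eq_of_homogeneousComponent_one_eq_X [DecidableEq σ]
    {p : MvPolynomial σ R} {i : σ} (h : homogeneousComponent 1 p = X i) (j : σ) :
    coeff (Finsupp.single j 1) p = if i = j then 1 else 0 := by
  have hcoeff := coeff_homogeneousComponent 1 p (Finsupp.single j 1)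
  rw [if_pos (Finsupp.degree_single j 1), h, coeff_X] at hcoeff
  simpa [Finsupp.single_left_inj one_ne_zero] using hcoeff.symm

theorem jacobian_minor_eq_C_of_totalDegree_eq_zero {f g : MvPolynomial σ R} {j k : σ}
    (h : (pderiv j f * pderiv k g - pderiv k f * pderiv j g).totalDegree = 0) :
    pderiv j f * pderiv k g - pderiv k f * pderiv j g =
      C (coeff (Finsupp.single j 1) f * coeff (Finsupp.single k 1) g -
        coeff (Finsupp.single k 1) f * coeff (Finsupp.single j 1) g) := by
  rw [totalDegree_eq_zero_iff_eq_C.mp h, ← constantCoeff_eq]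
  simp only [map_sub, map_mul, constantCoeff_pderiv]

end CommRing

end MvPolynomial

theorem eq_zero_of_det_eq_one_of_det_eq_zero {R : Type*} [CommRing R] {a₀ a₁ a b₀ b₁ b : R}
    (h₀₁ : a₀ * b₁ - a₁ * b₀ = 1) (h₀ : a₀ * b - a * b₀ = 0) (h₁ : a₁ * b - a * b₁ = 0) :
    a = 0 ∧ b = 0 :=
  ⟨by linear_combination a₁ * h₀ - a₀ * h₁ - a * h₀₁,
    by linear_combination b₁ * h₀ - b₀ * h₁ - b * h₀₁⟩

theorem poisson_deg_two_two_variables_general (n : ℕ)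
    (f g : MvPolynomial (Fin (n + 3)) ℂ)
    (hf1 : homogeneousComponent 1 f = X 0)
    (hg1 : homogeneousComponent 1 g = X 1)
    (hbr : ∀ j k : Fin (n + 3),
      (pderiv j f * pderiv k g - pderiv k f * pderiv j g).totalDegree = 0) :
    f ∈ supported ℂ ({0, 1} : Set (Fin (n + 3))) ∧
      g ∈ supported ℂ ({0, 1} : Set (Fin (n + 3))) := by
  have hminor (j k : Fin (n + 3)) := jacobian_minor_eq_C_of_totalDegree_eq_zero (hbr j k)
  simp only [coeff_single_one_eq_of_homogeneousComponent_one_eq_X hf1,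
    coeff_single_one_eq_of_homogeneousComponent_one_eq_X hg1] at hminor
  have hderiv (k : Fin (n + 3)) (hk : k ∉ ({0, 1} : Set (Fin (n + 3)))) :
      pderiv k f = 0 ∧ pderiv k g = 0 := by
    obtain ⟨hk₀, hk₁⟩ : k ≠ 0 ∧ k ≠ 1 := by simpa [not_or] using hk
    refine eq_zero_of_det_eq_one_of_det_eq_zero (a₀ := pderiv 0 f) (b₀ := pderiv 0 g)
      (a₁ := pderiv 1 f) (b₁ := pderiv 1 g) ?_ ?_ ?_
    · simpa using hminor 0 1
    · simpa [hk₀.symm, hk₁.symm] using hminor 0 k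
    · simpa [hk₀.symm, hk₁.symm] using hminor 1 k
  exact ⟨mem_supported_of_pderiv_eq_zero fun k hk => (hderiv k hk).1,
    mem_supported_of_pderiv_eq_zero fun k hk => (hderiv k hk).2⟩

theorem poisson_deg_two_two_variables (n : ℕ)
    (f g : MvPolynomial (Fin (n + 3)) ℂ)
    (hf0 : homogeneousComponent 0 f = 0)
    (hf1 : homogeneousComponent 1 f = X 0)
    (hg0 : homogeneousComponent 0 g = 0)
    (hg1 : homogeneousComponent 1 g = X 1)
    (hbr : ∀ j k : Fin (n + 3),
      (pderiv j f * pderiv k g - pderiv k f * pderiv j g).totalDegree = 0) :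
    f ∈ supported ℂ ({0, 1} : Set (Fin (n + 3))) ∧
      g ∈ supported ℂ ({0, 1} : Set (Fin (n + 3))) :=
  poisson_deg_two_two_variables_general n f g hf1 hg1 hbr
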